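/- Let A be a dual Banach algebra (i.e., A = (A_*)^* for a closed submodule A_* of A^*). If A is Connes amenable (possesses a σwc-virtual diagonal M in (σwc(A⊗̂A)^*)^* with a·M = M·a and a·π_σwc(M) = a for all a ∈ A), then A is Johnson pseudo-Connes amenable, i.e., there exists a net (m_α) in (A⊗̂A)^{**} such that ⟨T, a·m_α⟩ = ⟨T, m_α·a⟩ for all T ∈ σwc(A⊗̂A)^* and i_{A_*}^* π_A^{**}(m_α) a → a in norm for every a ∈ A. -/

import Mathlib

open Filter Topology ContinuousLinearMap

set_option maxHeartbeats 1000000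
set_option linter.unusedVariables false
set_option synthInstance.maxHeartbeats 200000

noncomputable section

section DualBanach

variable {A : Type*} [NonUnitalNormedRing A] [NormedSpace ℂ A]
  [IsScalarTower ℂ A A] [SMulCommClass ℂ A A]

/-- Left multiplication `x ↦ a * x` as a continuous linear map. -/
def mulL (a : A) : A →L[ℂ] A := ContinuousLinearMap.mul ℂ A a

/-- Right multiplication `x ↦ x * a` as a continuous linear map. -/
def mulR (a : A) : A →L[ℂ] A := (ContinuousLinearMap.mul ℂ A).flip a

@[simp] lemma mulL_apply (a x : A) : mulL a x = a * x := rfl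
@[simp] lemma mulR_apply (a x : A) : mulR a x = x * a := rfl

/-- The canonical evaluation of `a : A` on a submodule of the dual, giving a
functional on that submodule. -/
def evalOn (S : Submodule ℂ (A →L[ℂ] ℂ)) (a : A) : S →L[ℂ] ℂ :=
  (ContinuousLinearMap.apply ℂ ℂ a).comp S.subtypeL

/-- A dual Banach algebra structure on `A`: a closed submodule `carrier` of the
dual `A⋆` (closed under the module actions) such that `A` is canonically
isometrically isomorphic to the dual of `carrier`. -/
structure DualStructure (A : Type*) [NonUnitalNormedRing A] [NormedSpace ℂ A]
    [IsScalarTower ℂ A A] [SMulCommClass ℂ A A] where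
  carrier : Submodule ℂ (A →L[ℂ] ℂ)
  isClosed' : IsClosed (carrier : Set (A →L[ℂ] ℂ))
  lact_mem' : ∀ (a : A) (f : A →L[ℂ] ℂ), f ∈ carrier → f.comp (mulR a) ∈ carrier
  ract_mem' : ∀ (a : A) (f : A →L[ℂ] ℂ), f ∈ carrier → f.comp (mulL a) ∈ carrier
  bijective' : Function.Bijective (fun a : A => evalOn carrier a)
  isometry' : ∀ a : A,
    sSup {r : ℝ | ∃ f : A →L[ℂ] ℂ, f ∈ carrier ∧ ‖f‖ ≤ 1 ∧ r = ‖f a‖} = ‖a‖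

/-- `A`, regarded with its weak-star topology `σ(A, A_*)`. -/
def WkA (P : DualStructure A) : Type _ := A

/-- The identity map `WkA P → A`. -/
def WkA.un (P : DualStructure A) : WkA P → A := fun a => a

/-- The identity map `A → WkA P`. -/
def WkA.mk (P : DualStructure A) : A → WkA P := fun a => a

instance (P : DualStructure A) : TopologicalSpace (WkA P) :=
  TopologicalSpace.induced
    (fun a => fun f : P.carrier => (f : A →L[ℂ] ℂ) (WkA.un P a)) inferInstance

/-- Weak-star continuity of a map out of a dual Banach algebra. -/
def WkCont (P : DualStructure A) {E : Type*} [TopologicalSpace E] (g : A → E) : Prop :=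
  Continuous fun a : WkA P => g (WkA.un P a)

/-- The dual of the projective tensor product `A ⊗̂ A`, realized as the space of
bounded bilinear functionals on `A × A`. -/
abbrev TDual (A : Type*) [NonUnitalNormedRing A] [NormedSpace ℂ A]
    [IsScalarTower ℂ A A] [SMulCommClass ℂ A A] := A →L[ℂ] A →L[ℂ] ℂ

/-- The left action `a · T` of `A` on `(A ⊗̂ A)⋆`: `(a·T)(b ⊗ c) = T(b ⊗ ca)`. -/
def lactOp (a : A) : TDual A →L[ℂ] TDual A :=
  compL ℂ A (A →L[ℂ] ℂ) (A →L[ℂ] ℂ) ((compL ℂ A A ℂ).flip (mulR a))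

/-- The right action `T · a` of `A` on `(A ⊗̂ A)⋆`: `(T·a)(b ⊗ c) = T(ab ⊗ c)`. -/
def ractOp (a : A) : TDual A →L[ℂ] TDual A :=
  (compL ℂ A A (A →L[ℂ] ℂ)).flip (mulL a)

@[simp] lemma lactOp_apply (a : A) (T : TDual A) (b c : A) :
    lactOp a T b c = T b (c * a) := rfl

@[simp] lemma ractOp_apply (a : A) (T : TDual A) (b c : A) :
    ractOp a T b c = T (a * b) c := rfl

/-- `σwc((A ⊗̂ A)⋆)`: the set of bilinear functionals `T` for which both
`a ↦ a·T` and `a ↦ T·a` are weak-star–weak continuous. -/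
def sigmaWC (P : DualStructure A) : Set (TDual A) :=
  {T | ∀ Φ : TDual A →L[ℂ] ℂ,
    WkCont P (fun a => Φ (lactOp a T)) ∧ WkCont P (fun a => Φ (ractOp a T))}

/-- `σwc((A ⊗̂ A)⋆)` as a submodule. -/
def sigmaWCsub (P : DualStructure A) : Submodule ℂ (TDual A) where
  carrier := sigmaWC P
  zero_mem' := by
    intro Φ
    constructor <;>
    · show Continuous _
      have : (fun x : WkA P => Φ ((0 : TDual A →L[ℂ] TDual A) 0)) = fun _ => (0 : ℂ) := by
        funext x; simp
      simp only [map_zero]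
      exact continuous_const
  add_mem' := by
    intro T S hT hS Φ
    constructor
    · have h := ((hT Φ).1).add ((hS Φ).1)
      show Continuous _
      simpa [map_add, Pi.add_def] using h
    · have h := ((hT Φ).2).add ((hS Φ).2)
      show Continuous _
      simpa [map_add, Pi.add_def] using h
  smul_mem' := by
    intro c T hT Φ
    constructor
    · have h := ((hT Φ).1).const_smul c
      show Continuous _
      simpa [map_smul, Pi.smul_def] using h
    · have h := ((hT Φ).2).const_smul c
      show Continuous _
      simpa [map_smul, Pi.smul_def] using h

lemma wkCont_of_mem (P : DualStructure A) {f : A →L[ℂ] ℂ} (hf : f ∈ P.carrier) :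
    WkCont P (fun a => f a) := by
  have h1 : Continuous fun a : WkA P =>
      (fun g : P.carrier => (g : A →L[ℂ] ℂ) (WkA.un P a)) := continuous_induced_dom
  exact (continuous_apply (⟨f, hf⟩ : P.carrier)).comp h1

lemma wkCont_mulL (P : DualStructure A) (a : A) :
    Continuous fun x : WkA P => WkA.mk P (a * WkA.un P x) := by
  apply continuous_induced_rng.2
  apply continuous_pi
  intro g
  exact wkCont_of_mem P (P.ract_mem' a g.1 g.2)

lemma wkCont_mulR (P : DualStructure A) (a : A) :
    Continuous fun x : WkA P => WkA.mk P (WkA.un P x * a) := by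
  apply continuous_induced_rng.2
  apply continuous_pi
  intro g
  exact wkCont_of_mem P (P.lact_mem' a g.1 g.2)

lemma ract_mem_sigmaWC (P : DualStructure A) {T : TDual A}
    (hT : T ∈ sigmaWC P) (a : A) : ractOp a T ∈ sigmaWC P := by
  intro Φ
  constructor
  · have key : ∀ a' : A, lactOp a' (ractOp a T) = ractOp a (lactOp a' T) := by
      intro a'; ext b c; simp
    have h := (hT (Φ.comp (ractOp a))).1
    show Continuous _
    simpa [key, WkCont, Function.comp_def] using h
  · have key : ∀ a' : A, ractOp a' (ractOp a T) = ractOp (a * a') T := by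
      intro a'; ext b c; simp [mul_assoc]
    have h := ((hT Φ).2).comp (wkCont_mulL P a)
    show Continuous _
    simp only [key]; exact h

lemma lact_mem_sigmaWC (P : DualStructure A) {T : TDual A}
    (hT : T ∈ sigmaWC P) (a : A) : lactOp a T ∈ sigmaWC P := by
  intro Φ
  constructor
  · have key : ∀ a' : A, lactOp a' (lactOp a T) = lactOp (a' * a) T := by
      intro a'; ext b c; simp [mul_assoc]
    have h := ((hT Φ).1).comp (wkCont_mulR P a)
    show Continuous _
    simp only [key]; exact h
  · have key : ∀ a' : A, ractOp a' (lactOp a T) = lactOp a (ractOp a' T) := by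
      intro a'; ext b c; simp
    have h := (hT (Φ.comp (lactOp a))).2
    show Continuous _
    simpa [key, WkCont, Function.comp_def] using h

/-- The adjoint of the multiplication map `π : A ⊗̂ A → A` applied to a
functional: `π⋆(f)(b ⊗ c) = f (b c)`. -/
def piStar (f : A →L[ℂ] ℂ) : TDual A :=
  (compL ℂ A A ℂ f).comp (ContinuousLinearMap.mul ℂ A)

@[simp] lemma piStar_apply (f : A →L[ℂ] ℂ) (b c : A) : piStar f b c = f (b * c) := rfl

/-- Johnson pseudo-Connes amenability of a dual Banach algebra: there is a (not
necessarily bounded) net `(m i)` in `(A ⊗̂ A)⋆⋆` such that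
`⟨T, a·mᵢ⟩ = ⟨T, mᵢ·a⟩` for all `T ∈ σwc((A ⊗̂ A)⋆)` and
`i⋆_{A_*} π⋆⋆(mᵢ) a → a` in norm for every `a`; the element `b i ∈ A`
represents `i⋆_{A_*} π⋆⋆(mᵢ)` via `f (b i) = mᵢ (π⋆ f)` for all `f ∈ A_*`. -/
def IsJPCA (P : DualStructure A) : Prop :=
  ∃ (ι : Type) (pr : Preorder ι), Nonempty ι ∧
    (∀ i j : ι, ∃ k, pr.le i k ∧ pr.le j k) ∧
    ∃ (m : ι → (TDual A →L[ℂ] ℂ)) (b : ι → A),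
      (∀ i (a : A), ∀ T ∈ sigmaWC P, m i (ractOp a T) = m i (lactOp a T)) ∧
      (∀ i, ∀ f ∈ P.carrier, f (b i) = m i (piStar f)) ∧
      (∀ a : A, Tendsto (fun i => b i * a) (@Filter.atTop ι pr) (nhds a))

end DualBanach

section Statements

variable {A : Type*} [NonUnitalNormedRing A] [NormedSpace ℂ A]
  [IsScalarTower ℂ A A] [SMulCommClass ℂ A A]

/-- The operator `T ↦ T · a` on `σwc((A ⊗̂ A)⋆)`. -/
def ractS (P : DualStructure A) (a : A) : sigmaWCsub P →L[ℂ] sigmaWCsub P :=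
  ContinuousLinearMap.mk
    { toFun := fun T => ⟨ractOp a T.1, ract_mem_sigmaWC P T.2 a⟩
      map_add' := fun T S => Subtype.ext (by simp)
      map_smul' := fun c T => Subtype.ext (by simp) }
    (Continuous.subtype_mk ((ractOp a).continuous.comp continuous_subtype_val) _)

/-- The operator `T ↦ a · T` on `σwc((A ⊗̂ A)⋆)`. -/
def lactS (P : DualStructure A) (a : A) : sigmaWCsub P →L[ℂ] sigmaWCsub P :=
  ContinuousLinearMap.mk
    { toFun := fun T => ⟨lactOp a T.1, lact_mem_sigmaWC P T.2 a⟩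
      map_add' := fun T S => Subtype.ext (by simp)
      map_smul' := fun c T => Subtype.ext (by simp) }
    (Continuous.subtype_mk ((lactOp a).continuous.comp continuous_subtype_val) _)

/-- Connes amenability via a `σwc`-virtual diagonal `M ∈ (σwc((A⊗̂A)⋆))⋆`:
`a·M = M·a` (i.e. `M ∘ (T ↦ T·a) = M ∘ (T ↦ a·T)`) and `a · π_σwc(M) = a`,
where `e ∈ A` is the element `π_σwc(M)`, characterized against the predual. -/
def IsConnesAmenable (P : DualStructure A) : Prop :=
  ∃ M : sigmaWCsub P →L[ℂ] ℂ,
    (∀ a : A, M.comp (ractS P a) = M.comp (lactS P a)) ∧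
    ∃ e : A,
      (∀ f ∈ P.carrier, ∀ hf : piStar f ∈ sigmaWCsub P, f e = M ⟨piStar f, hf⟩) ∧
      (∀ a : A, a * e = a)

/-! Since `π⋆` maps `A_*` into `σwc((A ⊗̂ A)⋆)`, the identity `a·M = M·a` can be tested on
`π⋆ f`, which shows that `e = π_σwc(M)` commutes with every `a`; so the right identity `e` is a
two-sided identity. A Hahn–Banach extension of `M` to `(A ⊗̂ A)⋆` then serves as a constant net. -/

def piStarL : (A →L[ℂ] ℂ) →L[ℂ] TDual A :=
  ((compL ℂ A (A →L[ℂ] A) (A →L[ℂ] ℂ)).flip (ContinuousLinearMap.mul ℂ A)).comp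
    (compL ℂ A A ℂ)

lemma lactOp_piStar (a : A) (f : A →L[ℂ] ℂ) :
    lactOp a (piStar f) = piStar (f.comp (mulR a)) := by
  ext b c; simp [mul_assoc]

lemma ractOp_piStar (a : A) (f : A →L[ℂ] ℂ) :
    ractOp a (piStar f) = piStar (f.comp (mulL a)) := by
  ext b c; simp [mul_assoc]

lemma DualStructure.eq_of_forall_mem_carrier (P : DualStructure A) {x y : A}
    (h : ∀ f ∈ P.carrier, f x = f y) : x = y :=
  P.bijective'.1 <| ContinuousLinearMap.ext fun f => h f.1 f.2

/- Since `A = (A_*)⋆`, the functional `f ↦ Φ (π⋆ f)` on `A_*` is evaluation at some `b : A`,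
so `Φ (a · π⋆ f) = f (b a)` and `Φ (π⋆ f · a) = f (a b)` are weak-star continuous in `a`. -/
lemma piStar_mem_sigmaWC (P : DualStructure A) {f : A →L[ℂ] ℂ}
    (hf : f ∈ P.carrier) : piStar f ∈ sigmaWC P := by
  intro Φ
  obtain ⟨b, hb⟩ := P.bijective'.2 (Φ.comp (piStarL.comp P.carrier.subtypeL))
  have hb_apply : ∀ g ∈ P.carrier, g b = Φ (piStar g) := fun g hg =>
    DFunLike.congr_fun hb (⟨g, hg⟩ : P.carrier)
  constructor
  · refine (wkCont_of_mem P (P.ract_mem' b f hf)).congr fun a => ?_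
    change f (b * _) = Φ (lactOp _ (piStar f))
    rw [lactOp_piStar, ← hb_apply _ (P.lact_mem' _ f hf)]
    rfl
  · refine (wkCont_of_mem P (P.lact_mem' b f hf)).congr fun a => ?_
    change f (_ * b) = Φ (ractOp _ (piStar f))
    rw [ractOp_piStar, ← hb_apply _ (P.ract_mem' _ f hf)]
    rfl

lemma mul_comm_of_virtualDiagonal (P : DualStructure A) {M : sigmaWCsub P →L[ℂ] ℂ}
    (hM : ∀ a : A, M.comp (ractS P a) = M.comp (lactS P a)) {e : A}
    (he : ∀ f ∈ P.carrier, ∀ hf : piStar f ∈ sigmaWCsub P, f e = M ⟨piStar f, hf⟩)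
    (a : A) : a * e = e * a := by
  refine P.eq_of_forall_mem_carrier fun g hg => ?_
  have hg' : piStar g ∈ sigmaWCsub P := piStar_mem_sigmaWC P hg
  have hgL := P.ract_mem' a g hg
  have hgR := P.lact_mem' a g hg
  calc g (a * e) = M ⟨piStar (g.comp (mulL a)), piStar_mem_sigmaWC P hgL⟩ := he _ hgL _
    _ = M (ractS P a ⟨piStar g, hg'⟩) := congrArg M (Subtype.ext (ractOp_piStar a g).symm)
    _ = M (lactS P a ⟨piStar g, hg'⟩) := DFunLike.congr_fun (hM a) _
    _ = M ⟨piStar (g.comp (mulR a)), piStar_mem_sigmaWC P hgR⟩ :=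
        congrArg M (Subtype.ext (lactOp_piStar a g))
    _ = g (e * a) := (he _ hgR _).symm

lemma exists_extension_ractOp_eq_lactOp (P : DualStructure A) {M : sigmaWCsub P →L[ℂ] ℂ}
    (hM : ∀ a : A, M.comp (ractS P a) = M.comp (lactS P a)) :
    ∃ m : TDual A →L[ℂ] ℂ, (∀ T : sigmaWCsub P, m T = M T) ∧
      ∀ a : A, ∀ T ∈ sigmaWC P, m (ractOp a T) = m (lactOp a T) := by
  obtain ⟨m, hm, -⟩ := exists_extension_norm_eq (𝕜 := ℂ) (E := TDual A) (sigmaWCsub P) M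
  refine ⟨m, hm, fun a T hT => ?_⟩
  calc m (ractOp a T) = M (ractS P a ⟨T, hT⟩) := hm (ractS P a ⟨T, hT⟩)
    _ = M (lactS P a ⟨T, hT⟩) := DFunLike.congr_fun (hM a) _
    _ = m (lactOp a T) := (hm (lactS P a ⟨T, hT⟩)).symm

lemma IsJPCA.of_leftIdentity (P : DualStructure A) {m : TDual A →L[ℂ] ℂ} {e : A}
    (hm : ∀ a : A, ∀ T ∈ sigmaWC P, m (ractOp a T) = m (lactOp a T))
    (he : ∀ f ∈ P.carrier, f e = m (piStar f)) (hle : ∀ a : A, e * a = a) : IsJPCA P :=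
  ⟨Unit, inferInstance, inferInstance, fun _ _ => ⟨(), le_rfl, le_rfl⟩, fun _ => m,
    fun _ => e, fun _ => hm, fun _ => he, fun a => by simp only [hle, tendsto_const_nhds]⟩

theorem connesAmenable_implies_johnsonPseudoConnesAmenable_general
    (P : DualStructure A)
    (h : IsConnesAmenable P) : IsJPCA P := by
  obtain ⟨M, hM, e, he, hre⟩ := h
  obtain ⟨m, hmM, hm⟩ := exists_extension_ractOp_eq_lactOp P hM
  refine IsJPCA.of_leftIdentity P (e := e) hm (fun f hf => ?_) (fun a => ?_)
  · exact (he f hf _).trans (hmM ⟨piStar f, piStar_mem_sigmaWC P hf⟩).symm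
  · rw [← mul_comm_of_virtualDiagonal P hM he a, hre]

/-- A Connes amenable dual Banach algebra is Johnson
pseudo-Connes amenable. -/
theorem connesAmenable_implies_johnsonPseudoConnesAmenable
    [CompleteSpace A] (P : DualStructure A)
    (h : IsConnesAmenable P) : IsJPCA P :=
  connesAmenable_implies_johnsonPseudoConnesAmenable_general P h

end Statements
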